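/- Let A be an n×n complex random matrix with columns W₁,...,W_n, and for each k let H_k = span{W_j : j ≠ k}. Then for any t ≥ 0 and δ, ρ ∈ (0,1), P( min over (δ,ρ)-incompressible unit vectors x of ‖Ax‖₂ ≤ tρ/√n ) ≤ (2/(δn)) · Σ_{k=1}^n P( dist(W_k, H_k) ≤ t ). -/

import Mathlib

/-!
If `x` is `(δ, ρ)`-incompressible, more than `δ n` of its coordinates satisfy `ρ / √n ≤ ‖x k‖`:
otherwise zeroing the small coordinates produces a `δ n`-sparse vector within distance `ρ` of `x`.
For each such `k`, the vector `W_k - (x k)⁻¹ • A x` lies in `H_k`, so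
`dist(W_k, H_k) ≤ ‖A x‖ / ‖x k‖ ≤ t`. Thus on the event in question more than `δ n` of the events
`dist(W_k, H_k) ≤ t` occur, and Markov's inequality for their number gives the bound.
-/

open MeasureTheory

/-- Euclidean norm of a complex vector. -/
noncomputable def enorm' {ι : Type*} [Fintype ι] (v : ι → ℂ) : ℝ :=
  Real.sqrt (∑ i, ‖v i‖ ^ 2)

/-- Euclidean distance from a vector to a set of vectors. -/
noncomputable def distSet {ι : Type*} [Fintype ι] (v : ι → ℂ)
    (S : Set (ι → ℂ)) : ℝ :=
  sInf {r | ∃ y ∈ S, r = enorm' (v - y)}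

/-- Euclidean distance from a vector to a subspace. -/
noncomputable def distE {ι : Type*} [Fintype ι] (v : ι → ℂ)
    (H : Submodule ℂ (ι → ℂ)) : ℝ :=
  sInf {r | ∃ h ∈ H, r = enorm' (v - h)}

/-- The set of vectors in `ℂⁿ` supported on at most `δ n` coordinates. -/
def sparse (n : ℕ) (δ : ℝ) : Set (Fin n → ℂ) :=
  {y | (Nat.card {i // y i ≠ 0} : ℝ) ≤ δ * n}

open Finset Matrix

section EuclideanDistance

variable {ι : Type*} [Fintype ι]

lemma enorm'_eq_norm_toLp (v : ι → ℂ) : enorm' v = ‖WithLp.toLp 2 v‖ := by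
  rw [EuclideanSpace.norm_eq]; rfl

lemma enorm'_nonneg (v : ι → ℂ) : 0 ≤ enorm' v :=
  Real.sqrt_nonneg _

lemma enorm'_smul (c : ℂ) (v : ι → ℂ) : enorm' (c • v) = ‖c‖ * enorm' v := by
  rw [enorm'_eq_norm_toLp, enorm'_eq_norm_toLp, ← norm_smul, WithLp.toLp_smul]

lemma enorm'_le_sqrt_card_mul {v : ι → ℂ} {τ : ℝ} (hτ : 0 ≤ τ) (hv : ∀ i, ‖v i‖ ≤ τ) :
    enorm' v ≤ Real.sqrt (Fintype.card ι) * τ := by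
  calc enorm' v ≤ Real.sqrt (∑ _i : ι, τ ^ 2) :=
        Real.sqrt_le_sqrt <| sum_le_sum fun i _ => pow_le_pow_left₀ (norm_nonneg _) (hv i) 2
    _ = Real.sqrt (Fintype.card ι) * τ := by
        rw [sum_const, nsmul_eq_mul, Real.sqrt_mul (Nat.cast_nonneg _),
          Real.sqrt_sq hτ, card_univ]

lemma distSet_le_enorm'_sub (v : ι → ℂ) {S : Set (ι → ℂ)} {y : ι → ℂ} (hy : y ∈ S) :
    distSet v S ≤ enorm' (v - y) :=
  csInf_le ⟨0, by rintro r ⟨z, -, rfl⟩; exact enorm'_nonneg _⟩ ⟨y, hy, rfl⟩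

lemma distE_le_enorm'_sub (v : ι → ℂ) {H : Submodule ℂ (ι → ℂ)} {h : ι → ℂ} (hh : h ∈ H) :
    distE v H ≤ enorm' (v - h) :=
  csInf_le ⟨0, by rintro r ⟨z, -, rfl⟩; exact enorm'_nonneg _⟩ ⟨h, hh, rfl⟩

end EuclideanDistance

lemma distSet_sparse_le {n : ℕ} {δ τ : ℝ} (hτ : 0 ≤ τ) (x : Fin n → ℂ)
    (hcard : (#{k | τ ≤ ‖x k‖} : ℝ) ≤ δ * n) :
    distSet x (sparse n δ) ≤ Real.sqrt n * τ := by
  set y : Fin n → ℂ := fun k => if τ ≤ ‖x k‖ then x k else 0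
  have hy : y ∈ sparse n δ := by
    refine le_trans ?_ hcard
    rw [Nat.card_eq_fintype_card, Fintype.card_subtype]
    refine Nat.cast_le.mpr (card_le_card fun k => ?_)
    simp only [mem_filter, mem_univ, true_and]
    contrapose!
    simp_all [y]
  refine (distSet_le_enorm'_sub x hy).trans ?_
  refine (enorm'_le_sqrt_card_mul hτ fun k => ?_).trans_eq (by rw [Fintype.card_fin])
  by_cases hk : τ ≤ ‖x k‖
  · simp [y, hk, hτ]
  · simpa [y, hk] using (not_le.mp hk).le

lemma distE_column_le {m : Type*} [Fintype m] {ι : Type*} [Fintype ι] [DecidableEq ι]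
    (A : Matrix m ι ℂ) (x : ι → ℂ) {k : ι} (hk : x k ≠ 0) :
    distE (fun r => A r k) (Submodule.span ℂ {w | ∃ j, j ≠ k ∧ w = fun r => A r j})
      ≤ ‖x k‖⁻¹ * enorm' (A *ᵥ x) := by
  set W : ι → m → ℂ := fun j r => A r j
  set H := Submodule.span ℂ {w | ∃ j, j ≠ k ∧ w = W j}
  have hAx : A *ᵥ x = x k • W k + ∑ j ∈ univ.erase k, x j • W j := by
    rw [add_sum_erase _ (fun j => x j • W j) (mem_univ k)]
    ext r
    simp [mulVec, dotProduct, W, mul_comm]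
  have hrest : x k • W k - A *ᵥ x ∈ H := by
    rw [hAx, sub_add_cancel_left]
    refine neg_mem (Submodule.sum_mem _ fun j hj => Submodule.smul_mem _ _ ?_)
    exact Submodule.subset_span ⟨j, (mem_erase.mp hj).1, rfl⟩
  have hmem : W k - (x k)⁻¹ • A *ᵥ x ∈ H := by
    convert H.smul_mem (x k)⁻¹ hrest using 1
    rw [smul_sub, smul_smul, inv_mul_cancel₀ hk, one_smul]
  calc distE (W k) H ≤ enorm' (W k - (W k - (x k)⁻¹ • A *ᵥ x)) := distE_le_enorm'_sub _ hmem
    _ = ‖x k‖⁻¹ * enorm' (A *ᵥ x) := by rw [sub_sub_cancel, enorm'_smul, norm_inv]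

lemma distE_column_le_of_le_norm {m : Type*} [Fintype m] {ι : Type*} [Fintype ι] [DecidableEq ι]
    (A : Matrix m ι ℂ) {x : ι → ℂ} {k : ι} {t τ : ℝ} (hτ : 0 < τ) (hk : τ ≤ ‖x k‖)
    (hAx : enorm' (A *ᵥ x) ≤ t * τ) :
    distE (fun r => A r k) (Submodule.span ℂ {w | ∃ j, j ≠ k ∧ w = fun r => A r j}) ≤ t := by
  have hxk : 0 < ‖x k‖ := hτ.trans_le hk
  calc _ ≤ ‖x k‖⁻¹ * enorm' (A *ᵥ x) := distE_column_le A x (norm_pos_iff.mp hxk)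
    _ ≤ τ⁻¹ * (t * τ) := by
        gcongr
        exact enorm'_nonneg _
    _ = t := by field_simp

lemma lt_card_large_coords_of_lt_distSet_sparse {n : ℕ} (hn : 0 < n) {δ ρ : ℝ} (hρ : 0 < ρ)
    {x : Fin n → ℂ} (hx : ρ < distSet x (sparse n δ)) :
    δ * n < #{k | ρ / Real.sqrt n ≤ ‖x k‖} := by
  have hsqrt : 0 < Real.sqrt n := Real.sqrt_pos.mpr (Nat.cast_pos.mpr hn)
  by_contra! hcard
  have := distSet_sparse_le (by positivity) x hcard
  rw [mul_div_cancel₀ _ hsqrt.ne'] at this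
  linarith

open Classical in
lemma ofReal_mul_measure_le_sum_measure {Ω ι : Type*} [MeasurableSpace Ω] [Fintype ι]
    (μ : Measure Ω) (B : ι → Set Ω) {E : Set Ω} {c : ℝ}
    (hE : ∀ ω ∈ E, c ≤ #{k | ω ∈ B k}) :
    ENNReal.ofReal c * μ E ≤ ∑ k, μ (B k) := by
  set C : ι → Set Ω := fun k => toMeasurable μ (B k)
  have hC : ∀ k, MeasurableSet (C k) := fun k => measurableSet_toMeasurable μ (B k)
  set f : Ω → ENNReal := fun ω => ∑ k, (C k).indicator 1 ω
  have hf : Measurable f := Finset.measurable_sum _ fun k _ => measurable_one.indicator (hC k)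
  have hEf : E ⊆ {ω | ENNReal.ofReal c ≤ f ω} := by
    intro ω hω
    calc ENNReal.ofReal c ≤ (#{k | ω ∈ B k} : ENNReal) := by
          simpa using ENNReal.ofReal_le_ofReal (hE ω hω)
      _ = ∑ k, (B k).indicator 1 ω := by simp [sum_indicator_eq_sum_filter]
      _ ≤ f ω := sum_le_sum fun k _ =>
          Set.indicator_le_indicator_of_subset (subset_toMeasurable μ (B k)) (fun _ => zero_le) ω
  calc ENNReal.ofReal c * μ E ≤ ENNReal.ofReal c * μ {ω | ENNReal.ofReal c ≤ f ω} := by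
        gcongr
    _ ≤ ∫⁻ ω, f ω ∂μ := mul_meas_ge_le_lintegral₀ hf.aemeasurable _
    _ = ∑ k, μ (B k) := by
        rw [lintegral_finsetSum _ fun k _ => measurable_one.indicator (hC k)]
        simp [C, lintegral_indicator_one (hC _), measure_toMeasurable]

open Classical in
lemma measure_le_ofReal_inv_mul_sum_measure {Ω ι : Type*} [MeasurableSpace Ω] [Fintype ι]
    (μ : Measure Ω) (B : ι → Set Ω) {E : Set Ω} {c : ℝ} (hc : 0 < c)
    (hE : ∀ ω ∈ E, c ≤ #{k | ω ∈ B k}) :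
    μ E ≤ ENNReal.ofReal c⁻¹ * ∑ k, μ (B k) :=
  calc μ E = ENNReal.ofReal c⁻¹ * (ENNReal.ofReal c * μ E) := by
        rw [← mul_assoc, ← ENNReal.ofReal_mul (inv_nonneg.mpr hc.le), inv_mul_cancel₀ hc.ne',
          ENNReal.ofReal_one, one_mul]
    _ ≤ ENNReal.ofReal c⁻¹ * ∑ k, μ (B k) := by
        gcongr
        exact ofReal_mul_measure_le_sum_measure μ B hE

theorem invertibility_via_distance_general {Ω : Type*} [MeasurableSpace Ω]
    (μ : Measure Ω)
    {n : ℕ} (hn : 0 < n) (A : Ω → Matrix (Fin n) (Fin n) ℂ)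
    (t δ ρ : ℝ) (hδ : δ ∈ Set.Ioo (0 : ℝ) 1)
    (hρ : ρ ∈ Set.Ioo (0 : ℝ) 1) :
    μ {ω | ∃ x : Fin n → ℂ, enorm' x = 1 ∧ ρ < distSet x (sparse n δ) ∧
        enorm' ((A ω).mulVec x) ≤ t * ρ / Real.sqrt n}
      ≤ ENNReal.ofReal (2 / (δ * n)) *
        ∑ k : Fin n, μ {ω | distE (fun r => A ω r k)
          (Submodule.span ℂ {w | ∃ j : Fin n, j ≠ k ∧ w = fun r => A ω r j}) ≤ t} := by
  classical
  set B : Fin n → Set Ω := fun k => {ω | distE (fun r => A ω r k)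
    (Submodule.span ℂ {w | ∃ j : Fin n, j ≠ k ∧ w = fun r => A ω r j}) ≤ t}
  have hτ : 0 < ρ / Real.sqrt n := div_pos hρ.1 (Real.sqrt_pos.mpr (Nat.cast_pos.mpr hn))
  have hδn : 0 < δ * n := mul_pos hδ.1 (Nat.cast_pos.mpr hn)
  have hspread : ∀ ω ∈ {ω | ∃ x : Fin n → ℂ, enorm' x = 1 ∧ ρ < distSet x (sparse n δ) ∧
      enorm' ((A ω).mulVec x) ≤ t * ρ / Real.sqrt n}, δ * n ≤ #{k | ω ∈ B k} := by
    rintro ω ⟨x, -, hx, hAx⟩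
    refine (lt_card_large_coords_of_lt_distSet_sparse hn hρ.1 hx).le.trans ?_
    refine Nat.cast_le.mpr (card_le_card fun k hk => ?_)
    simp only [mem_filter, mem_univ, true_and] at hk ⊢
    exact distE_column_le_of_le_norm (A ω) hτ hk (by rwa [← mul_div_assoc])
  refine (measure_le_ofReal_inv_mul_sum_measure μ B hδn hspread).trans ?_
  gcongr
  rw [div_eq_mul_inv]
  linarith [inv_pos.mpr hδn]

/-- For a random `n × n` complex matrix `A` with columns `W₁, …, W_n`, and
`H_k = span{W_j : j ≠ k}`:
`P(min_{x incompressible} ‖A x‖₂ ≤ t ρ/√n) ≤ (2/(δn)) ∑_k P(dist(W_k, H_k) ≤ t)`. -/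
theorem invertibility_via_distance {Ω : Type*} [MeasurableSpace Ω]
    (μ : Measure Ω) [IsProbabilityMeasure μ]
    {n : ℕ} (hn : 0 < n) (A : Ω → Matrix (Fin n) (Fin n) ℂ)
    (t δ ρ : ℝ) (ht : 0 ≤ t) (hδ : δ ∈ Set.Ioo (0 : ℝ) 1)
    (hρ : ρ ∈ Set.Ioo (0 : ℝ) 1) :
    μ {ω | ∃ x : Fin n → ℂ, enorm' x = 1 ∧ ρ < distSet x (sparse n δ) ∧
        enorm' ((A ω).mulVec x) ≤ t * ρ / Real.sqrt n}
      ≤ ENNReal.ofReal (2 / (δ * n)) *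
        ∑ k : Fin n, μ {ω | distE (fun r => A ω r k)
          (Submodule.span ℂ {w | ∃ j : Fin n, j ≠ k ∧ w = fun r => A ω r j}) ≤ t} :=
  invertibility_via_distance_general μ hn A t δ ρ hδ hρ
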